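/- arXiv:math/0206133 — 2 statements merged into one kernel-verified Lean document; each statement's English description precedes it below -/
import Mathlib

section
/- Let f : X × U → R^n be continuously differentiable with X ⊆ R^n, U ⊆ R^m open, and suppose the Kamke condition holds: for all ξ1 ⪰ ξ2 in X (componentwise), u1 ⪰ u2 in U (componentwise), and any index i with ξ1_i = ξ2_i, one has f_i(ξ1, u1) ≥ f_i(ξ2, u2). Then ∂f_i/∂x_j(x,u) ≥ 0 for all x ∈ X, u ∈ U, i ≠ j, and ∂f_i/∂u_j(x,u) ≥ 0 for all x, u, i, j. -/
open Filter Set Topology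

/-! Fix `p ∈ X × U` and an index `i`. By the Kamke condition, `p` minimises `q ↦ f q i` on the set
of points `q ≥ p` of `X × U` with `q.1 i = p.1 i`. Every direction `w ≥ 0` with `w.1 i = 0`
is tangent to this set at `p`, since `X × U` is open, so Fermat's rule gives
`0 ≤ ∂f_i(p) w`. The unit vectors `(e_j, 0)` with `j ≠ i` and `(0, e_j)` are such directions. -/

theorem mem_posTangentConeAt_inter_of_mem_nhds {E : Type*} [NormedAddCommGroup E]
    [NormedSpace ℝ E] {s C : Set E} {x y : E} (hs : s ∈ 𝓝 x)
    (hC : ∀ t : ℝ, 0 < t → x + t • y ∈ C) :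
    y ∈ posTangentConeAt (s ∩ C) x := by
  have hline : Tendsto (fun t : ℝ => x + t • y) (𝓝 0) (𝓝 x) :=
    (continuous_const.add (continuous_id.smul continuous_const)).tendsto' 0 x (by simp)
  refine mem_posTangentConeAt_of_frequently_mem (Eventually.frequently ?_)
  filter_upwards [nhdsWithin_le_nhds (hline.eventually_mem hs), self_mem_nhdsWithin]
    with t hts ht
  exact ⟨hts, hC t ht⟩

theorem stmt_11 (n m : ℕ)
    (X : Set (Fin n → ℝ)) (U : Set (Fin m → ℝ))
    (hXo : IsOpen X) (hUo : IsOpen U)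
    (f : (Fin n → ℝ) × (Fin m → ℝ) → Fin n → ℝ)
    (hf : ContDiffOn ℝ 1 f (X ×ˢ U))
    (hkamke : ∀ ξ₁ ∈ X, ∀ ξ₂ ∈ X, ∀ u₁ ∈ U, ∀ u₂ ∈ U,
      (∀ j, ξ₂ j ≤ ξ₁ j) → (∀ j, u₂ j ≤ u₁ j) →
      ∀ i : Fin n, ξ₁ i = ξ₂ i → f (ξ₂, u₂) i ≤ f (ξ₁, u₁) i) :
    ∀ p ∈ X ×ˢ U,
      (∀ i j : Fin n, i ≠ j → 0 ≤ fderiv ℝ f p (Pi.single j 1, 0) i) ∧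
      (∀ (i : Fin n) (j : Fin m), 0 ≤ fderiv ℝ f p (0, Pi.single j 1) i) := by
  intro p hp
  have hs : X ×ˢ U ∈ 𝓝 p := (hXo.prod hUo).mem_nhds hp
  have hdiff : DifferentiableAt ℝ f p := (hf.contDiffAt hs).differentiableAt one_ne_zero
  have key : ∀ i w, 0 ≤ w → w.1 i = 0 → 0 ≤ fderiv ℝ f p w i := by
    intro i w hw hwi
    set K := X ×ˢ U ∩ {q | p ≤ q ∧ q.1 i = p.1 i}
    have hmin : IsMinOn (fun q => f q i) K p :=
      fun q ⟨⟨hq₁, hq₂⟩, hpq, hqi⟩ => hkamke q.1 hq₁ p.1 hp.1 q.2 hq₂ p.2 hp.2 hpq.1 hpq.2 i hqi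
    have hw : w ∈ posTangentConeAt K p :=
      mem_posTangentConeAt_inter_of_mem_nhds hs fun t ht =>
        ⟨le_add_of_nonneg_right (smul_nonneg ht.le hw), by simp [hwi]⟩
    have hderiv : HasFDerivAt (fun q => f q i)
        ((ContinuousLinearMap.proj i).comp (fderiv ℝ f p)) p :=
      hasFDerivAt_pi'.1 hdiff.hasFDerivAt i
    exact hmin.localize.hasFDerivWithinAt_nonneg hderiv.hasFDerivWithinAt hw
  refine ⟨fun i j hij => key i _ ?_ (Pi.single_eq_of_ne hij 1),
    fun i j => key i _ ?_ rfl⟩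
  · exact ⟨Pi.single_nonneg.2 zero_le_one, le_rfl⟩
  · exact ⟨le_rfl, Pi.single_nonneg.2 zero_le_one⟩
end

section
/- Let k_y, k_w : R → R be continuous with k_y nondecreasing and k_w nonincreasing, and suppose the iteration u_{k+1} = k_w(k_y(u_k)) has a unique globally attractive fixed point ū. Suppose real numbers y_−, y_+ satisfy y_− ≤ y_+, (k_y∘k_w)(y_+) ≤ y_−, and y_+ ≤ (k_y∘k_w)(y_−). Then y_− = y_+ and y_− is the unique fixed point of k_y∘k_w. -/
open Filter Topology

theorem stmt_17 (ky kw : ℝ → ℝ)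
    (hky : Continuous ky) (hkw : Continuous kw)
    (hmono : Monotone ky) (hanti : Antitone kw)
    (ubar : ℝ) (hfix : kw (ky ubar) = ubar)
    (huniq : ∀ u : ℝ, kw (ky u) = u → u = ubar)
    (hattr : ∀ u₀ : ℝ,
      Tendsto (fun k => (fun u => kw (ky u))^[k] u₀) atTop (𝓝 ubar))
    (ym yp : ℝ) (hle : ym ≤ yp)
    (h₁ : ky (kw yp) ≤ ym) (h₂ : yp ≤ ky (kw ym)) :
    ym = yp ∧ ky (kw ym) = ym ∧ ∀ y : ℝ, ky (kw y) = y → y = ym := by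
  set f : ℝ → ℝ := fun u => ky (kw u) with hf
  set g : ℝ → ℝ := fun u => kw (ky u) with hg
  set vbar : ℝ := ky ubar with hv
  have hfanti : Antitone f := fun a b hab => hmono (hanti hab)
  have hF : Monotone (f^[2]) := fun a b hab => hfanti (hfanti hab)
  -- iterate formula : f^[n+1] x = ky (g^[n] (kw x))
  have hiter : ∀ n x, f^[n+1] x = ky (g^[n] (kw x)) := by
    intro n
    induction n with
    | zero => intro x; simp [hf]
    | succ n ih =>
      intro x
      rw [Function.iterate_succ_apply f (n+1) x, ih (f x)]
      have hcw : kw (f x) = g (kw x) := rfl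
      rw [hcw, ← Function.iterate_succ_apply g n (kw x)]
  -- limit: f^[n] x → vbar
  have hlim : ∀ x, Tendsto (fun n => f^[n] x) atTop (𝓝 vbar) := by
    intro x
    have h1 : Tendsto (fun n => ky (g^[n] (kw x))) atTop (𝓝 vbar) :=
      (hky.tendsto ubar).comp (hattr (kw x))
    have h2 : Tendsto (fun n => f^[n+1] x) atTop (𝓝 vbar) := by
      simpa only [hiter] using h1
    exact (tendsto_add_atTop_iff_nat 1).mp h2
  have hlim2 : ∀ x, Tendsto (fun n => (f^[2])^[n] x) atTop (𝓝 vbar) := by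
    intro x
    have h2n : Tendsto (fun n : ℕ => 2 * n) atTop atTop :=
      tendsto_atTop_mono (fun n => Nat.le_mul_of_pos_left n two_pos) tendsto_id
    have h := (hlim x).comp h2n
    have he : ((fun n => f^[n] x) ∘ fun n => 2 * n) = fun n => (f^[2])^[n] x :=
      funext fun n => by
        simp only [Function.comp_apply]
        exact congrFun (Function.iterate_mul f 2 n) x
    rwa [he] at h
  have hf2 : ∀ x, f^[2] x = f (f x) := by
    intro x; rw [Function.iterate_succ_apply', Function.iterate_one]
  have hym2 : f^[2] ym ≤ ym := by
    rw [hf2]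
    exact le_trans (hfanti h₂) h₁
  have hyp2 : yp ≤ f^[2] yp := by
    rw [hf2]
    exact le_trans h₂ (hfanti h₁)
  have hymn : ∀ n, (f^[2])^[n] ym ≤ ym := by
    intro n
    induction n with
    | zero => exact le_refl ym
    | succ n ih =>
      calc (f^[2])^[n+1] ym = (f^[2])^[n] (f^[2] ym) :=
            Function.iterate_succ_apply _ n ym
        _ ≤ (f^[2])^[n] ym := hF.iterate n hym2
        _ ≤ ym := ih
  have hypn : ∀ n, yp ≤ (f^[2])^[n] yp := by
    intro n
    induction n with
    | zero => exact le_refl yp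
    | succ n ih =>
      calc yp ≤ (f^[2])^[n] yp := ih
        _ ≤ (f^[2])^[n] (f^[2] yp) := hF.iterate n hyp2
        _ = (f^[2])^[n+1] yp := (Function.iterate_succ_apply _ n yp).symm
  have hv_le : vbar ≤ ym :=
    le_of_tendsto (hlim2 ym) (Filter.Eventually.of_forall hymn)
  have hle_v : yp ≤ vbar :=
    ge_of_tendsto (hlim2 yp) (Filter.Eventually.of_forall hypn)
  have heq : ym = yp := le_antisymm hle (le_trans hle_v hv_le)
  have hymv : ym = vbar := le_antisymm (heq ▸ hle_v) hv_le
  have hfixm : ky (kw ym) = ym := by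
    rw [hymv]
    show f vbar = vbar
    have : kw vbar = ubar := hfix
    show ky (kw vbar) = vbar
    rw [this]
  refine ⟨heq, hfixm, fun y hy => ?_⟩
  have : kw (ky (kw y)) = kw y := by rw [hy]
  have h3 : kw y = ubar := huniq (kw y) this
  rw [← hy, h3, ← hv, hymv]
end
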